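/- arXiv:1607.00071 — 3 statements merged into one kernel-verified Lean document; each statement's English description precedes it below -/
import Mathlib

section
/- Let (Ω, F) be a measurable space with F ≠ {∅, Ω}. For every m ≥ 1 there exists a mixture of measures with m components that is not (2m−1)-determined: there exist mixtures of measures P with m components and P' with m+1 components, P ≠ P', such that V_{2m−1}(P) = V_{2m−1}(P'). -/
open MeasureTheory

/-- A mixture of measures on a measurable space `Ω`: a finite convex combination
`∑ i, w i • δ_{μ i}` of Dirac masses at distinct probability measures, with
strictly positive weights summing to one. -/
structure MixtureOfMeasures (Ω : Type*) [MeasurableSpace Ω] where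
  m : ℕ
  w : Fin m → ℝ
  μ : Fin m → Measure Ω
  prob : ∀ i, IsProbabilityMeasure (μ i)
  pos : ∀ i, 0 < w i
  sum_one : ∑ i, w i = 1
  inj : Function.Injective μ

namespace MixtureOfMeasures

variable {Ω : Type*} [MeasurableSpace Ω]

/-- `V n P = ∑ i, w i • (μ i)^{×n}`, the measure on the `n`-fold product space induced by
drawing `μ ∼ P` and then `n` iid samples from `μ`. -/
noncomputable def V (P : MixtureOfMeasures Ω) (n : ℕ) : Measure (Fin n → Ω) :=
  ∑ i, ENNReal.ofReal (P.w i) • Measure.pi (fun _ : Fin n => P.μ i)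

/-- Two mixtures of measures are equal (as mixtures) if their components and weights agree
up to a permutation. -/
def Equal (P P' : MixtureOfMeasures Ω) : Prop :=
  ∃ σ : Fin P'.m ≃ Fin P.m, ∀ j, P'.μ j = P.μ (σ j) ∧ P'.w j = P.w (σ j)

end MixtureOfMeasures

/-!
Pick `x ∈ S`, `y ∉ S` and use the two-point measures `Ber(x, y, t) = t δ_x + (1 - t) δ_y`. The
`n`-fold product of `Ber(x, y, t)` gives each pattern `s ∈ {x, y}ⁿ` a mass which is a polynomial
of degree `≤ n` in `t`, so `∑ wᵢ • Ber(x, y, tᵢ)^{×n}` depends only on the functional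
`G ↦ ∑ wᵢ G(tᵢ)` on polynomials of degree `≤ n`. Since the `2m`-th finite difference of a
polynomial of degree `< 2m` vanishes, `∑ₖ (-1)ᵏ C(2m, k) G(k / 2m) = 0`; splitting by the
parity of `k`, the `m + 1` even nodes `2i / 2m` and the `m` odd nodes `(2i + 1) / 2m`, with weights
`C(2m, k) / 2^{2m-1}`, agree on all polynomials of degree `≤ 2m - 1`.
-/

open Finset Polynomial ProbabilityTheory unitInterval MixtureOfMeasures

theorem Polynomial.sum_range_neg_one_pow_mul_choose_mul_eval {R : Type*} [CommRing R] {P : R[X]}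
    {n : ℕ} (hP : P.natDegree < n) :
    ∑ k ∈ range (n + 1), (-1 : R) ^ (n - k) * n.choose k * P.eval (k : R) = 0 := by
  have := congrFun (fwdDiff_iter_eq_zero_of_degree_lt hP) 0
  rw [fwdDiff_iter_eq_sum_shift] at this
  simpa [zsmul_eq_mul] using this

theorem Finset.sum_range_two_mul_add_one {M : Type*} [AddCommMonoid M] (f : ℕ → M) (m : ℕ) :
    ∑ j ∈ range (2 * m + 1), f j
      = ∑ i ∈ range (m + 1), f (2 * i) + ∑ i ∈ range m, f (2 * i + 1) := by
  induction m with
  | zero => simp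
  | succ m ih =>
    rw [show 2 * (m + 1) + 1 = 2 * m + 1 + 1 + 1 by ring, sum_range_succ, sum_range_succ, ih,
      sum_range_succ (fun i => f (2 * i)) (m + 1), sum_range_succ (fun i => f (2 * i + 1)) m,
      show 2 * (m + 1) = 2 * m + 1 + 1 by ring]
    abel

theorem Polynomial.sum_range_choose_mul_eval_even_eq_odd {R : Type*} [CommRing R] {G : R[X]}
    {m : ℕ} (hG : G.natDegree < 2 * m) :
    ∑ i ∈ range (m + 1), ((2 * m).choose (2 * i) : R) * G.eval ((2 * i : ℕ) : R)
      = ∑ i ∈ range m, ((2 * m).choose (2 * i + 1) : R) * G.eval ((2 * i + 1 : ℕ) : R) := by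
  have h_even : ∀ i ∈ range (m + 1), (-1 : R) ^ (2 * m - 2 * i) = 1 := fun i hi => by
    rw [show 2 * m - 2 * i = 2 * (m - i) by omega, pow_mul]; simp
  have h_odd : ∀ i ∈ range m, (-1 : R) ^ (2 * m - (2 * i + 1)) = -1 := fun i hi => by
    rw [mem_range] at hi
    rw [show 2 * m - (2 * i + 1) = 2 * (m - i - 1) + 1 by omega, pow_succ, pow_mul]; simp
  have h := sum_range_neg_one_pow_mul_choose_mul_eval hG
  rw [sum_range_two_mul_add_one, sum_congr rfl fun i hi => by rw [h_even i hi, one_mul],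
    sum_congr rfl fun i (hi : i ∈ range m) => by rw [h_odd i hi, neg_one_mul, neg_mul],
    sum_neg_distrib, ← sub_eq_add_neg, sub_eq_zero] at h
  exact h

theorem Nat.sum_range_choose_even_eq_odd {m : ℕ} (hm : 0 < m) :
    ∑ i ∈ range (m + 1), (2 * m).choose (2 * i)
      = ∑ i ∈ range m, (2 * m).choose (2 * i + 1) := by
  have := sum_range_choose_mul_eval_even_eq_odd (R := ℤ) (G := 1) (by simpa using hm)
  simp only [eval_one, mul_one] at this
  exact_mod_cast this

theorem Nat.sum_range_choose_even {m : ℕ} (hm : 0 < m) :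
    ∑ i ∈ range (m + 1), (2 * m).choose (2 * i) = 2 ^ (2 * m - 1) := by
  have h_total := Nat.sum_range_choose (2 * m)
  have h_pow : 2 ^ (2 * m) = 2 ^ (2 * m - 1) * 2 := by rw [← pow_succ]; congr 1; omega
  rw [sum_range_two_mul_add_one, ← sum_range_choose_even_eq_odd hm, h_pow] at h_total
  omega

theorem Polynomial.natDegree_comp_C_mul_X_le {R : Type*} [Semiring R] (G : R[X]) (c : R) :
    (G.comp (C c * X)).natDegree ≤ G.natDegree :=
  natDegree_comp_le.trans
    (mul_le_of_le_one_right (Nat.zero_le _) ((natDegree_C_mul_le _ X).trans natDegree_X_le))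

noncomputable def unitInterval.gridPoint (n : ℕ) (k : Fin (n + 1)) : I :=
  ⟨(k : ℕ) / n, by positivity, div_le_one_of_le₀ (by exact_mod_cast k.is_le) n.cast_nonneg⟩

theorem unitInterval.coe_gridPoint (n : ℕ) (k : Fin (n + 1)) :
    (gridPoint n k : ℝ) = (k : ℕ) / n := rfl

theorem unitInterval.gridPoint_injective {n : ℕ} (hn : 0 < n) :
    Function.Injective (gridPoint n) := fun k l h => by
  have := congrArg Subtype.val h
  rw [coe_gridPoint, coe_gridPoint, div_left_inj' (by positivity)] at this
  exact Fin.ext (by exact_mod_cast this)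

namespace EvenOddQuadrature

noncomputable def evenNode (m : ℕ) (i : Fin (m + 1)) : I :=
  gridPoint (2 * m) ⟨2 * i, by omega⟩

noncomputable def oddNode (m : ℕ) (i : Fin m) : I :=
  gridPoint (2 * m) ⟨2 * i + 1, by omega⟩

noncomputable def evenWeight (m : ℕ) (i : Fin (m + 1)) : ℝ :=
  (2 * m).choose (2 * i) / 2 ^ (2 * m - 1)

noncomputable def oddWeight (m : ℕ) (i : Fin m) : ℝ :=
  (2 * m).choose (2 * i + 1) / 2 ^ (2 * m - 1)

variable {m : ℕ}

theorem evenNode_injective (hm : 0 < m) : Function.Injective (evenNode m) := fun i j h => by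
  have := Fin.mk.inj (gridPoint_injective (by omega) h)
  omega

theorem oddNode_injective (hm : 0 < m) : Function.Injective (oddNode m) := fun i j h => by
  have := Fin.mk.inj (gridPoint_injective (by omega) h)
  omega

theorem evenWeight_pos (i : Fin (m + 1)) : 0 < evenWeight m i := by
  have := Nat.choose_pos (by omega : 2 * (i : ℕ) ≤ 2 * m)
  unfold evenWeight
  positivity

theorem oddWeight_pos (i : Fin m) : 0 < oddWeight m i := by
  have := Nat.choose_pos (by omega : 2 * (i : ℕ) + 1 ≤ 2 * m)
  unfold oddWeight
  positivity

theorem sum_evenWeight (hm : 0 < m) : ∑ i, evenWeight m i = 1 := by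
  simp_rw [evenWeight, ← sum_div]
  rw [Fin.sum_univ_eq_sum_range (fun i => ((2 * m).choose (2 * i) : ℝ)),
    div_eq_one_iff_eq (by positivity)]
  exact_mod_cast Nat.sum_range_choose_even hm

theorem sum_oddWeight (hm : 0 < m) : ∑ i, oddWeight m i = 1 := by
  simp_rw [oddWeight, ← sum_div]
  rw [Fin.sum_univ_eq_sum_range (fun i => ((2 * m).choose (2 * i + 1) : ℝ)),
    div_eq_one_iff_eq (by positivity)]
  exact_mod_cast (Nat.sum_range_choose_even_eq_odd hm).symm.trans (Nat.sum_range_choose_even hm)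

theorem sum_evenWeight_mul_eval_eq {G : ℝ[X]} (hG : G.natDegree < 2 * m) :
    ∑ i, evenWeight m i * G.eval (evenNode m i : ℝ)
      = ∑ i, oddWeight m i * G.eval (oddNode m i : ℝ) := by
  set H := G.comp (C (2 * m : ℝ)⁻¹ * X)
  have h_eval : ∀ k : ℕ, H.eval (k : ℝ) = G.eval ((k : ℝ) / (2 * m : ℕ)) := fun k => by
    simp [H, eval_comp, div_eq_inv_mul]
  have := sum_range_choose_mul_eval_even_eq_odd (G := H)
    ((natDegree_comp_C_mul_X_le G _).trans_lt hG)
  simp only [h_eval] at this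
  rw [← Fin.sum_univ_eq_sum_range (fun i => _ * G.eval (((2 * i : ℕ) : ℝ) / (2 * m : ℕ))),
    ← Fin.sum_univ_eq_sum_range (fun i => _ * G.eval (((2 * i + 1 : ℕ) : ℝ) / (2 * m : ℕ)))]
    at this
  simp_rw [evenWeight, oddWeight, div_mul_eq_mul_div, ← sum_div]
  exact congrArg (· / _) this

end EvenOddQuadrature

section

variable {Ω : Type*} [MeasurableSpace Ω]

theorem ProbabilityTheory.bernoulliMeasure_injective {x y : Ω} {S : Set Ω}
    (hS : MeasurableSet S) (hx : x ∈ S) (hy : y ∉ S) :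
    Function.Injective (bernoulliMeasure x y) := fun p q h => by
  have := congrArg (· S) h
  simp only [bernoulliMeasure_apply_of_mem_of_notMem _ hS hx hy, ENNReal.coe_inj] at this
  exact Subtype.ext (by simpa using congrArg NNReal.toReal this)

theorem ProbabilityTheory.pi_bernoulliMeasure {ι : Type*} [Fintype ι] (x y : Ω) (p : I) :
    Measure.pi (fun _ : ι => Ber(x, y, p))
      = (Measure.pi fun _ : ι => Ber(true, false, p)).map (fun s j => bif s j then x else y) := by
  have hf : Measurable fun b : Bool => bif b then x else y := measurable_from_top
  rw [Measure.pi_map_pi (fun _ => hf.aemeasurable)]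
  simp_rw [map_bernoulliMeasure' _ _ hf]
  rfl

theorem ProbabilityTheory.bernoulliMeasure_bool_singleton (p : I) (b : Bool) :
    Ber(true, false, p) {b} = ENNReal.ofReal (bif b then (p : ℝ) else 1 - p) := by
  cases b <;> simp [← ENNReal.ofReal_coe_nnreal]

theorem ProbabilityTheory.sum_smul_pi_bernoulliMeasure_singleton {κ ι : Type*} [Fintype κ]
    [Fintype ι] {w : κ → ℝ} (hw : ∀ i, 0 ≤ w i) (p : κ → I) (s : ι → Bool) :
    (∑ i, ENNReal.ofReal (w i) • Measure.pi fun _ : ι => Ber(true, false, p i)) {s}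
      = ENNReal.ofReal (∑ i, w i * ∏ j, bif s j then (p i : ℝ) else 1 - p i) := by
  have h_nonneg : ∀ i j, 0 ≤ bif s j then (p i : ℝ) else 1 - p i := fun i j => by
    cases s j <;> simp [(p i).2.1, (p i).2.2]
  simp only [Measure.coe_finsetSum, Finset.sum_apply, Measure.smul_apply, Measure.pi_singleton,
    bernoulliMeasure_bool_singleton, smul_eq_mul]
  rw [ENNReal.ofReal_sum_of_nonneg fun i _ =>
    mul_nonneg (hw i) (prod_nonneg fun j _ => h_nonneg i j)]
  refine sum_congr rfl fun i _ => ?_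
  rw [ENNReal.ofReal_mul (hw i), ENNReal.ofReal_prod_of_nonneg fun j _ => h_nonneg i j]

theorem Polynomial.natDegree_prod_bif_X_one_sub_X_le {R ι : Type*} [CommRing R] [Fintype ι]
    (s : ι → Bool) :
    (∏ j, bif s j then (X : R[X]) else 1 - X).natDegree ≤ Fintype.card ι := by
  refine (natDegree_prod_le _ _).trans ?_
  rw [← Finset.card_univ, card_eq_sum_ones]
  refine sum_le_sum fun j _ => ?_
  cases s j
  · exact (natDegree_sub_le _ _).trans (by simpa using natDegree_X_le)
  · exact natDegree_X_le

theorem ProbabilityTheory.sum_smul_pi_bernoulliMeasure_eq_of_eval_eq {κ κ' ι : Type*}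
    [Fintype κ] [Fintype κ'] [Fintype ι] (x y : Ω) {w : κ → ℝ} {w' : κ' → ℝ}
    {p : κ → I} {p' : κ' → I} (hw : ∀ i, 0 ≤ w i) (hw' : ∀ i, 0 ≤ w' i)
    (h : ∀ G : ℝ[X], G.natDegree ≤ Fintype.card ι →
      ∑ i, w i * G.eval (p i : ℝ) = ∑ i, w' i * G.eval (p' i : ℝ)) :
    ∑ i, ENNReal.ofReal (w i) • Measure.pi (fun _ : ι => Ber(x, y, p i))
      = ∑ i, ENNReal.ofReal (w' i) • Measure.pi (fun _ : ι => Ber(x, y, p' i)) := by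
  have hg : Measurable fun (s : ι → Bool) j => bif s j then x else y :=
    measurable_pi_lambda _ fun j =>
      (measurable_from_top (f := fun b : Bool => bif b then x else y)).comp (measurable_pi_apply j)
  simp_rw [pi_bernoulliMeasure x y, ← Measure.map_smul,
    ← Measure.map_finset_sum' hg.aemeasurable]
  congr 1
  refine Measure.ext_of_singleton fun s => ?_
  rw [sum_smul_pi_bernoulliMeasure_singleton hw, sum_smul_pi_bernoulliMeasure_singleton hw']
  have hG := h _ (natDegree_prod_bif_X_one_sub_X_le s)
  simp only [eval_prod, Bool.apply_cond (eval _), eval_X, eval_sub, eval_one] at hG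
  rw [hG]

namespace MixtureOfMeasures

open EvenOddQuadrature

variable {x y : Ω} {S : Set Ω} {m : ℕ}

theorem Equal.m_eq {P P' : MixtureOfMeasures Ω} (h : P.Equal P') : P'.m = P.m := by
  obtain ⟨e, -⟩ := h
  simpa using Fintype.card_congr e

noncomputable def evenMixture (hS : MeasurableSet S) (hx : x ∈ S) (hy : y ∉ S) (hm : 0 < m) :
    MixtureOfMeasures Ω where
  m := m + 1
  w := evenWeight m
  μ i := Ber(x, y, evenNode m i)
  prob _ := inferInstance
  pos := evenWeight_pos
  sum_one := sum_evenWeight hm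
  inj := (bernoulliMeasure_injective hS hx hy).comp (evenNode_injective hm)

noncomputable def oddMixture (hS : MeasurableSet S) (hx : x ∈ S) (hy : y ∉ S) (hm : 0 < m) :
    MixtureOfMeasures Ω where
  m := m
  w := oddWeight m
  μ i := Ber(x, y, oddNode m i)
  prob _ := inferInstance
  pos := oddWeight_pos
  sum_one := sum_oddWeight hm
  inj := (bernoulliMeasure_injective hS hx hy).comp (oddNode_injective hm)

theorem V_evenMixture_eq_V_oddMixture (hS : MeasurableSet S) (hx : x ∈ S) (hy : y ∉ S)
    (hm : 0 < m) :
    (evenMixture hS hx hy hm).V (2 * m - 1) = (oddMixture hS hx hy hm).V (2 * m - 1) :=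
  sum_smul_pi_bernoulliMeasure_eq_of_eval_eq x y (fun i => (evenWeight_pos i).le)
    (fun i => (oddWeight_pos i).le) fun _ hG => sum_evenWeight_mul_eval_eq (by simp at hG; omega)

end MixtureOfMeasures

end

/-- On any measurable space with a nontrivial σ-algebra, for every `m ≥ 1` there is a
mixture of measures with `m` components that is not `(2m-1)`-determined: there are mixtures
`P` with `m` components and `P'` with `m+1` components, `P ≠ P'`, with the same `V_{2m-1}`. -/
theorem exists_mixture_not_determined {Ω : Type*} [MeasurableSpace Ω]
    (hF : ∃ S : Set Ω, MeasurableSet S ∧ S ≠ ∅ ∧ S ≠ Set.univ)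
    (m : ℕ) (hm : 1 ≤ m) :
    ∃ P P' : MixtureOfMeasures Ω, P.m = m ∧ P'.m = m + 1 ∧ ¬ P'.Equal P ∧
      P'.V (2 * m - 1) = P.V (2 * m - 1) := by
  obtain ⟨S, hS, hS_ne, hS_ne_univ⟩ := hF
  obtain ⟨x, hx⟩ := Set.nonempty_iff_ne_empty.mpr hS_ne
  obtain ⟨y, hy⟩ := (Set.ne_univ_iff_exists_notMem S).mp hS_ne_univ
  exact ⟨oddMixture hS hx hy hm, evenMixture hS hx hy hm, rfl, rfl,
    fun h => m.succ_ne_self h.m_eq.symm, V_evenMixture_eq_V_oddMixture hS hx hy hm⟩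
end

section
/- If P = Σ_{i=1}^m w_i δ_{μ_i} is a mixture of measures whose components μ_1, ..., μ_m are linearly independent, then P is 4-determined: any mixture of measures P' of any order with V_4(P) = V_4(P') must equal P. -/
open MeasureTheory

/-! Regard each component `μ i` as the function `A ↦ (μ i A).toReal` on sets. Evaluated on
rectangles and extended multilinearly, `V₄(P') = V₄(P)` says that
`∑ j, w' j * ∏ k, ℓ k (μ' j) = ∑ i, w i * ∏ k, ℓ k (μ i)` for all finite linear combinations
`ℓ 0, …, ℓ 3` of point evaluations, and linear independence yields such `ℓ a` dual to the `μ i`.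
Testing with `(ℓ, ℓ, univ, univ)`, where `ℓ` annihilates every `μ i`, forces `ℓ` to annihilate
every `μ' j`, so `μ' j = ∑ a, c j a • μ a` with `c j a = ℓ a (μ' j)`. Testing with
`(ℓ a, ℓ a, ℓ b, ℓ b)` gives `c j a * c j b = 0` for `a ≠ b`; as every row of `c` sums to `1`,
each `μ' j` is a single `μ (σ j)`, and `(ℓ a, ℓ a, ℓ a, ℓ a)` then matches the weights. -/

open Finsupp

section MomentForm

variable {S ι κ : Type*} [Fintype ι] [Fintype κ]

/-- The multilinear extension of the moment tensor `s ↦ ∑ i, w i * ∏ k, f i (s k)` from tuples of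
points of `S` to tuples of finitely supported combinations of points. -/
noncomputable def momentForm (n : ℕ) (w : ι → ℝ) (f : ι → S → ℝ) :
    MultilinearMap ℝ (fun _ : Fin n => S →₀ ℝ) ℝ :=
  ∑ i, w i • (MultilinearMap.mkPiAlgebra ℝ (Fin n) ℝ).compLinearMap
    fun _ => linearCombination ℝ (f i)

theorem momentForm_apply (n : ℕ) (w : ι → ℝ) (f : ι → S → ℝ) (d : Fin n → S →₀ ℝ) :
    momentForm n w f d = ∑ i, w i * ∏ k, linearCombination ℝ (f i) (d k) := by
  simp [momentForm]

theorem momentForm_eq_of_forall_prod_eq {n : ℕ} {w : ι → ℝ} {f : ι → S → ℝ} {w' : κ → ℝ}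
    {g : κ → S → ℝ} (h : ∀ A : Fin n → S, ∑ j, w' j * ∏ k, g j (A k) = ∑ i, w i * ∏ k, f i (A k)) :
    momentForm n w' g = momentForm n w f :=
  Module.Basis.ext_multilinear (fun _ => Finsupp.basisSingleOne) fun A => by
    simpa [momentForm_apply] using h A

theorem momentForm_four_apply_pairs (w : ι → ℝ) (f : ι → S → ℝ) (a b : S →₀ ℝ) :
    momentForm 4 w f ![a, a, b, b] =
      ∑ i, w i * (linearCombination ℝ (f i) a * linearCombination ℝ (f i) b) ^ 2 := by
  simp only [momentForm_apply, Fin.prod_univ_four]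
  congr! 1 with i
  simp only [Matrix.cons_val]
  ring

end MomentForm

theorem LinearIndependent.exists_linearCombination_eq {S ι : Type*} [Fintype ι] {f : ι → S → ℝ}
    (hf : LinearIndependent ℝ f) (x : ι → ℝ) :
    ∃ d : S →₀ ℝ, ∀ i, linearCombination ℝ (f i) d = x i := by
  classical
  let T : (S →₀ ℝ) →ₗ[ℝ] ι → ℝ := LinearMap.pi fun i => linearCombination ℝ (f i)
  suffices LinearMap.range T = ⊤ by
    obtain ⟨d, hd⟩ := LinearMap.range_eq_top.1 this x
    exact ⟨d, fun i => congrFun hd i⟩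
  by_contra hT
  obtain ⟨φ, hφ, hle⟩ := (LinearMap.range T).exists_le_ker_of_lt_top (lt_top_iff_ne_top.2 hT)
  let c : ι → ℝ := fun i => φ fun j => if i = j then 1 else 0
  have hφc : ∀ x, φ x = ∑ i, x i * c i := φ.pi_apply_eq_sum_univ
  have hc : ∑ i, c i • f i = 0 := funext fun s => by
    have := hle (LinearMap.mem_range_self T (single s 1))
    simpa [T, hφc, mul_comm] using this
  exact hφ (LinearMap.ext fun x => by
    simp [hφc, Fintype.linearIndependent_iff.1 hf c hc])

theorem eq_zero_of_sum_mul_sq_eq_zero {κ : Type*} [Fintype κ] {w x : κ → ℝ}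
    (hw : ∀ j, 0 < w j) (h : ∑ j, w j * x j ^ 2 = 0) (j : κ) : x j = 0 := by
  have := (Finset.sum_eq_zero_iff_of_nonneg fun j _ => by have := hw j; positivity).1 h j
    (Finset.mem_univ j)
  simpa [(hw j).ne'] using this

theorem exists_eq_pi_single_of_sum_eq_one {ι : Type*} [Fintype ι] [DecidableEq ι] {x : ι → ℝ}
    (hsum : ∑ a, x a = 1) (hmul : ∀ a b, a ≠ b → x a * x b = 0) : ∃ a, x = Pi.single a 1 := by
  obtain ⟨a, ha⟩ : ∃ a, x a ≠ 0 := by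
    by_contra! h
    simp [h] at hsum
  have hzero : ∀ b, b ≠ a → x b = 0 := fun b hb =>
    (mul_eq_zero.1 (hmul a b (Ne.symm hb))).resolve_left ha
  refine ⟨a, funext fun b => ?_⟩
  rcases eq_or_ne b a with rfl | hb
  · rw [← hsum, Finset.sum_eq_single b (fun c _ hc => hzero c hc) (by simp), Pi.single_eq_same]
  · rw [hzero b hb, Pi.single_eq_of_ne hb]

section Identifiability

variable {S ι κ : Type*} [Fintype ι] [Fintype κ]
  {w : ι → ℝ} {f : ι → S → ℝ} {w' : κ → ℝ} {g : κ → S → ℝ} {ℓ : ι → S →₀ ℝ}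

theorem eq_sum_dual_smul_of_momentForm_four_eq [DecidableEq ι] (hw' : ∀ j, 0 < w' j) {s₀ : S}
    (hg₀ : ∀ j, g j s₀ = 1)
    (hℓ : ∀ a i, linearCombination ℝ (f i) (ℓ a) = (Pi.single a 1 : ι → ℝ) i)
    (h : momentForm 4 w' g = momentForm 4 w f) (j : κ) :
    g j = ∑ a, linearCombination ℝ (g j) (ℓ a) • f a := by
  funext s
  -- `d` kills every `f i`; testing the moment identity with `(d, d, s₀, s₀)`, it kills every `g j`.
  set d := single s 1 - ∑ a, f a s • ℓ a
  have hfd : ∀ i, linearCombination ℝ (f i) d = 0 := fun i => by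
    simp [d, hℓ, Pi.single_apply]
  have hgd := congrArg (· ![d, d, single s₀ 1, single s₀ 1]) h
  simp only [momentForm_four_apply_pairs, hfd, linearCombination_single, hg₀] at hgd
  have := eq_zero_of_sum_mul_sq_eq_zero hw' (by simpa using hgd) j
  simp only [d, map_sub, map_sum, map_smul, linearCombination_single] at this
  simpa [sub_eq_zero, mul_comm] using this

theorem sum_mul_sq_dual_of_momentForm_four_eq [DecidableEq ι]
    (hℓ : ∀ a i, linearCombination ℝ (f i) (ℓ a) = (Pi.single a 1 : ι → ℝ) i)
    (h : momentForm 4 w' g = momentForm 4 w f) (a b : ι) :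
    ∑ j, w' j * (linearCombination ℝ (g j) (ℓ a) * linearCombination ℝ (g j) (ℓ b)) ^ 2 =
      if a = b then w a else 0 := by
  have := congrArg (· ![ℓ a, ℓ a, ℓ b, ℓ b]) h
  simp only [momentForm_four_apply_pairs, hℓ] at this
  rw [this]
  rcases eq_or_ne a b with rfl | hab
  · simp [Pi.single_apply]
  · simp [Pi.single_apply, hab, hab.symm]

theorem exists_equiv_of_momentForm_four_eq (hf : LinearIndependent ℝ f)
    (hg : Function.Injective g) (hw : ∀ i, 0 < w i) (hw' : ∀ j, 0 < w' j) (s₀ : S)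
    (hf₀ : ∀ i, f i s₀ = 1) (hg₀ : ∀ j, g j s₀ = 1) (h : momentForm 4 w' g = momentForm 4 w f) :
    ∃ σ : κ ≃ ι, ∀ j, g j = f (σ j) ∧ w' j = w (σ j) := by
  classical
  choose ℓ hℓ using fun a => hf.exists_linearCombination_eq (Pi.single a 1)
  have hexp := eq_sum_dual_smul_of_momentForm_four_eq hw' hg₀ hℓ h
  have hrow : ∀ j, ∃ a, (fun b => linearCombination ℝ (g j) (ℓ b)) = Pi.single a 1 := fun j =>
    exists_eq_pi_single_of_sum_eq_one (by simpa [hf₀, hg₀] using (congrFun (hexp j) s₀).symm)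
      fun a b hab => by
        have hsq := (sum_mul_sq_dual_of_momentForm_four_eq hℓ h a b).trans (if_neg hab)
        simpa using eq_zero_of_sum_mul_sq_eq_zero hw' hsq j
  choose σ hσ using hrow
  have hgσ : ∀ j, g j = f (σ j) := fun j => by
    rw [hexp j]
    simp [congrFun (hσ j)]
  have hσinj : Function.Injective σ := fun j j' e => hg (by rw [hgσ, hgσ, e])
  have hfiber : ∀ a, ∑ j, (if a = σ j then w' j else 0) = w a := fun a => by
    simpa [congrFun (hσ _), Pi.single_apply, ← ite_and] using
      sum_mul_sq_dual_of_momentForm_four_eq hℓ h a a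
  have hσsurj : Function.Surjective σ := fun a => by
    by_contra! ha
    exact (hw a).ne' (by simpa [fun j => (ha j).symm] using (hfiber a).symm)
  refine ⟨Equiv.ofBijective σ ⟨hσinj, hσsurj⟩, fun j => ⟨hgσ j, ?_⟩⟩
  change w' j = w (σ j)
  rw [← hfiber (σ j),
    Finset.sum_eq_single j (fun j' _ hj' => if_neg (hσinj.ne hj').symm) (by simp), if_pos rfl]

end Identifiability

theorem MeasureTheory.Measure.eq_of_measureReal_eq {Ω : Type*} [MeasurableSpace Ω] {μ ν : Measure Ω}
    [IsFiniteMeasure μ] [IsFiniteMeasure ν] (h : μ.real = ν.real) : μ = ν :=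
  Measure.ext fun A _ => (measureReal_eq_measureReal_iff).1 (congrFun h A)

namespace MixtureOfMeasures

variable {Ω : Type*} [MeasurableSpace Ω]

theorem V_measureReal_univ_pi (P : MixtureOfMeasures Ω) {n : ℕ} (A : Fin n → Set Ω) :
    (P.V n).real (Set.univ.pi A) = ∑ i, P.w i * ∏ k, (P.μ i).real (A k) := by
  have := P.prob
  simp only [V, measureReal_def, Measure.coe_finsetSum, Finset.sum_apply, Measure.smul_apply,
    Measure.pi_pi, smul_eq_mul]
  rw [ENNReal.toReal_sum fun i _ =>
    ENNReal.mul_ne_top ENNReal.ofReal_ne_top (ENNReal.prod_ne_top fun k _ => measure_ne_top _ _)]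
  simp [(P.pos _).le]

theorem injective_measureReal (P : MixtureOfMeasures Ω) :
    Function.Injective fun i => (P.μ i).real :=
  have := P.prob
  fun _ _ h => P.inj (Measure.eq_of_measureReal_eq h)

end MixtureOfMeasures

/-- A mixture of measures with linearly independent components (as elements of the space of
finite signed measures) is `4`-determined. -/
theorem mixture_linearIndependent_determined_four {Ω : Type*} [MeasurableSpace Ω]
    (P : MixtureOfMeasures Ω)
    (hli : ∀ c : Fin P.m → ℝ,
      (∀ A : Set Ω, MeasurableSet A → ∑ i, c i * (P.μ i A).toReal = 0) → c = 0)
    (P' : MixtureOfMeasures Ω)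
    (hV : P'.V 4 = P.V 4) :
    P'.Equal P := by
  have := P.prob
  have := P'.prob
  have hf : LinearIndependent ℝ fun i => (P.μ i).real :=
    Fintype.linearIndependent_iff.2 fun c hc =>
      congrFun (hli c fun A _ => by simpa [measureReal_def] using congrFun hc A)
  have hmoments := momentForm_eq_of_forall_prod_eq (n := 4) fun A => by
    simpa only [MixtureOfMeasures.V_measureReal_univ_pi] using
      congrArg (fun ν => ν.real (Set.univ.pi A)) hV
  obtain ⟨σ, hσ⟩ := exists_equiv_of_momentForm_four_eq hf P'.injective_measureReal P.pos P'.pos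
    Set.univ (fun _ => probReal_univ) (fun _ => probReal_univ) hmoments
  refine ⟨σ.symm, fun i => ?_⟩
  obtain ⟨hμ, hw⟩ := hσ (σ.symm i)
  rw [σ.apply_symm_apply] at hμ hw
  exact ⟨(Measure.eq_of_measureReal_eq hμ).symm, hw.symm⟩
end

section
/- Fix m, s, n, q ∈ ℕ₊ with n ≥ 2m. Suppose Σ_{i=1}^m a_i Q_{n,p_i,q} = Σ_{j=1}^s b_j Q_{n,r_j,q} where the Q_{n,p_i,q} are distinct, the Q_{n,r_j,q} are distinct, all a_i, b_j > 0, and Σ a_i = Σ b_j = 1 (with no restriction relating s to m). Then s = m and there is a permutation σ with a_i = b_{σ(i)} and p_i = r_{σ(i)} for all i. -/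
/-!
The factorial moments of a multinomial law are monomials in its parameter:
`E[∏ⱼ X_j^{(t_j)}] = n^{(|t|)} ∏ⱼ p_j^{t_j}` for `|t| ≤ n`. Equal mixtures on `C_{n,q}` therefore
give the two finite atomic measures `∑ aᵢ δ_{pᵢ}` and `∑ bₖ δ_{rₖ}` the same integral against every
polynomial of total degree at most `n ≥ 2m`. Products of squared distances to the `pᵢ` are such
polynomials: `∏ᵢ ‖x - pᵢ‖²` is nonnegative and vanishes exactly at the `pᵢ`, which forces every
`rₖ` to be some `pᵢ`, and the Lagrange-type polynomials `∏_{i ≠ i₀} ‖x - pᵢ‖² / ‖p_{i₀} - pᵢ‖²`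
read off the weights, which are positive on both sides.
-/

open Finset

/-- `C_{n,q} = {x ∈ ℕ^q : ∑ x_i = n}`, the support of the multinomial distribution with
`n` trials and `q` categories. -/
def Cnq (n q : ℕ) : Finset (Fin q → ℕ) :=
  (Fintype.piFinset fun _ : Fin q => Finset.range (n + 1)).filter fun x => ∑ j, x j = n

/-- Probability mass function of the multinomial distribution `Q_{n,p,q}`:
`Q_{n,p,q}({x}) = n!/(x_1! ⋯ x_q!) · p_1^{x_1} ⋯ p_q^{x_q}`. -/
noncomputable def multinomialMass (n : ℕ) {q : ℕ} (p : Fin q → ℝ) (x : Fin q → ℕ) : ℝ :=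
  ((n.factorial : ℝ) / ∏ j, ((x j).factorial : ℝ)) * ∏ j, p j ^ x j

theorem Nat.multinomial_add_mul_prod_descFactorial {α : Type*} (s : Finset α) (y t : α → ℕ) :
    Nat.multinomial s (y + t) * ∏ j ∈ s, (y j + t j).descFactorial (t j)
      = (∑ j ∈ s, (y j + t j)).descFactorial (∑ j ∈ s, t j) * Nat.multinomial s y := by
  refine Nat.eq_of_mul_eq_mul_left (prod_pos fun j (_ : j ∈ s) => (y j).factorial_pos) ?_
  have hy : ∀ j, (y j).factorial * (y j + t j).descFactorial (t j) = (y j + t j).factorial :=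
    fun j => by simpa using Nat.factorial_mul_descFactorial (Nat.le_add_left (t j) (y j))
  have hsum : ∑ j ∈ s, (y j + t j) - ∑ j ∈ s, t j = ∑ j ∈ s, y j := by
    rw [sum_add_distrib, Nat.add_sub_cancel]
  calc (∏ j ∈ s, (y j).factorial) *
        (Nat.multinomial s (y + t) * ∏ j ∈ s, (y j + t j).descFactorial (t j))
      = (∏ j ∈ s, (y j + t j).factorial) * Nat.multinomial s (y + t) := by
        simp_rw [← hy, prod_mul_distrib]; ring
    _ = (∑ j ∈ s, (y j + t j)).factorial := Nat.multinomial_spec s (y + t)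
    _ = (∑ j ∈ s, y j).factorial * (∑ j ∈ s, (y j + t j)).descFactorial (∑ j ∈ s, t j) := by
        rw [← hsum, Nat.factorial_mul_descFactorial (by rw [sum_add_distrib]; omega)]
    _ = _ := by rw [← Nat.multinomial_spec s y]; ring

theorem Cnq_eq_piAntidiag (n q : ℕ) : Cnq n q = piAntidiag univ n := by
  ext x
  simp only [Cnq, mem_filter, Fintype.mem_piFinset, mem_range, mem_piAntidiag, mem_univ,
    ne_eq, imp_true_iff, and_true, and_iff_right_iff_imp]
  intro hx j
  have := single_le_sum (fun i _ => Nat.zero_le (x i)) (mem_univ j)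
  omega

theorem multinomialMass_eq {n q : ℕ} (p : Fin q → ℝ) {x : Fin q → ℕ} (hx : ∑ j, x j = n) :
    multinomialMass n p x = Nat.multinomial univ x * ∏ j, p j ^ x j := by
  have h := Nat.multinomial_spec univ x
  rw [hx] at h
  have hpos : (∏ j, ((x j).factorial : ℝ)) ≠ 0 := by positivity
  rw [multinomialMass, ← h]
  push_cast
  field_simp

theorem sum_multinomialMass_mul_prod_descFactorial {n q : ℕ} {p : Fin q → ℝ}
    (hp : ∑ j, p j = 1) {t : Fin q → ℕ} (ht : ∑ j, t j ≤ n) :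
    ∑ x ∈ Cnq n q, multinomialMass n p x * ∏ j, ((x j).descFactorial (t j) : ℝ)
      = n.descFactorial (∑ j, t j) * ∏ j, p j ^ t j := by
  set k := ∑ j, t j
  have hsub : (piAntidiag univ (n - k)).image (· + t) ⊆ Cnq n q := by
    intro x hx
    obtain ⟨y, hy, rfl⟩ := mem_image.mp hx
    rw [mem_piAntidiag] at hy
    rw [Cnq_eq_piAntidiag, mem_piAntidiag]
    simp only [Pi.add_apply, sum_add_distrib, hy.1, mem_univ, implies_true, and_true]
    omega
  have hzero : ∀ x ∈ Cnq n q, x ∉ (piAntidiag univ (n - k)).image (· + t) →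
      multinomialMass n p x * ∏ j, ((x j).descFactorial (t j) : ℝ) = 0 := by
    intro x hx hx'
    obtain ⟨j, hj⟩ : ∃ j, x j < t j := by
      by_contra! hle
      refine hx' (mem_image.mpr ⟨x - t, ?_, funext fun j => Nat.sub_add_cancel (hle j)⟩)
      rw [Cnq_eq_piAntidiag, mem_piAntidiag] at hx
      simp only [mem_piAntidiag, Pi.sub_apply, mem_univ, implies_true, and_true]
      rw [sum_tsub_distrib _ fun j _ => hle j, hx.1]
    rw [prod_eq_zero (mem_univ j) (by simp [Nat.descFactorial_eq_zero_iff_lt.mpr hj]), mul_zero]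
  rw [← sum_subset hsub hzero, sum_image fun _ _ _ _ h => add_right_cancel h]
  calc ∑ y ∈ piAntidiag univ (n - k),
        multinomialMass n p (y + t) * ∏ j, (((y + t) j).descFactorial (t j) : ℝ)
      = ∑ y ∈ piAntidiag univ (n - k),
          (n.descFactorial k * ∏ j, p j ^ t j) * (Nat.multinomial univ y * ∏ j, p j ^ y j) := by
        refine sum_congr rfl fun y hy => ?_
        have hyt : ∑ j, (y j + t j) = n := by
          rw [mem_piAntidiag] at hy
          rw [sum_add_distrib, hy.1]
          omega
        have hnat := Nat.multinomial_add_mul_prod_descFactorial univ y t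
        rw [hyt] at hnat
        rw [multinomialMass_eq (x := y + t) p hyt]
        simp only [Pi.add_apply, pow_add, prod_mul_distrib]
        have hcast : (Nat.multinomial univ (y + t) : ℝ) * ∏ j, ((y j + t j).descFactorial (t j) : ℝ)
            = n.descFactorial k * Nat.multinomial univ y := by exact_mod_cast hnat
        linear_combination ((∏ j, p j ^ y j) * ∏ j, p j ^ t j) * hcast
    _ = (n.descFactorial k * ∏ j, p j ^ t j) * (∑ j, p j) ^ (n - k) := by
        rw [← Finset.mul_sum, sum_pow_eq_sum_piAntidiag]
    _ = _ := by simp [hp]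

theorem sum_mixture_mul_prod_descFactorial {ι : Type*} [Fintype ι] {n q : ℕ} (a : ι → ℝ)
    {p : ι → Fin q → ℝ} (hp : ∀ i, ∑ j, p i j = 1) {t : Fin q → ℕ} (ht : ∑ j, t j ≤ n) :
    ∑ x ∈ Cnq n q, (∑ i, a i * multinomialMass n (p i) x) * ∏ j, ((x j).descFactorial (t j) : ℝ)
      = n.descFactorial (∑ j, t j) * ∑ i, a i * ∏ j, p i j ^ t j := by
  simp_rw [Finset.sum_mul, mul_assoc]
  rw [sum_comm]
  simp_rw [← Finset.mul_sum, sum_multinomialMass_mul_prod_descFactorial (hp _) ht, Finset.mul_sum]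
  exact sum_congr rfl fun i _ => mul_left_comm _ _ _

theorem sum_mul_prod_pow_eq_of_mixture_eq {ι κ : Type*} [Fintype ι] [Fintype κ] {n q : ℕ}
    {a : ι → ℝ} {b : κ → ℝ} {p : ι → Fin q → ℝ} {r : κ → Fin q → ℝ}
    (hp : ∀ i, ∑ j, p i j = 1) (hr : ∀ k, ∑ j, r k j = 1)
    (heq : ∀ x ∈ Cnq n q,
      ∑ i, a i * multinomialMass n (p i) x = ∑ k, b k * multinomialMass n (r k) x)
    {t : Fin q → ℕ} (ht : ∑ j, t j ≤ n) :
    ∑ i, a i * ∏ j, p i j ^ t j = ∑ k, b k * ∏ j, r k j ^ t j := by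
  have hmoments := sum_mixture_mul_prod_descFactorial a hp ht
  rw [sum_congr rfl fun x hx => by rw [heq x hx], sum_mixture_mul_prod_descFactorial b hr ht]
    at hmoments
  have hpos : (0 : ℝ) < n.descFactorial (∑ j, t j) := by
    exact_mod_cast Nat.descFactorial_pos.mpr ht
  exact (mul_left_cancel₀ hpos.ne' hmoments).symm

theorem injective_of_exists_multinomialMass_ne {ι : Type*} {n q : ℕ} {p : ι → Fin q → ℝ}
    (hp : ∀ i i', i ≠ i' → ∃ x ∈ Cnq n q, multinomialMass n (p i) x ≠ multinomialMass n (p i') x) :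
    Function.Injective p := by
  intro i i' h
  by_contra hne
  obtain ⟨x, -, hx⟩ := hp i i' hne
  exact hx (by rw [h])

namespace MvPolynomial

theorem sum_mul_eval_eq_of_sum_mul_prod_pow_eq {ι κ σ R : Type*} [Fintype ι] [Fintype κ]
    [Fintype σ] [CommSemiring R] {a : ι → R} {b : κ → R} {p : ι → σ → R} {r : κ → σ → R}
    {n : ℕ} (h : ∀ t : σ → ℕ, ∑ l, t l ≤ n →
      ∑ i, a i * ∏ l, p i l ^ t l = ∑ k, b k * ∏ l, r k l ^ t l)
    {P : MvPolynomial σ R} (hP : P.totalDegree ≤ n) :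
    ∑ i, a i * eval (p i) P = ∑ k, b k * eval (r k) P := by
  have heval : ∀ u : σ → R, eval u P = ∑ d ∈ P.support, coeff d P * ∏ l, u l ^ d l := by
    intro u
    conv_lhs => rw [P.as_sum, map_sum]
    refine sum_congr rfl fun d _ => ?_
    rw [eval_monomial, Finsupp.prod_fintype _ _ fun l => pow_zero (u l)]
  simp_rw [heval, Finset.mul_sum]
  rw [sum_comm]
  conv_rhs => rw [sum_comm]
  refine sum_congr rfl fun d hd => ?_
  have hdeg : ∑ l, d l ≤ n := by
    have := le_totalDegree hd
    rw [Finsupp.sum_fintype _ _ fun _ => rfl] at this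
    omega
  simp only [mul_left_comm (a _), mul_left_comm (b _), ← Finset.mul_sum, h d hdeg]


section SqDist

variable {σ K : Type*} [Fintype σ]

noncomputable def sqDist [CommRing K] (v : σ → K) : MvPolynomial σ K :=
  ∑ l, (X l - C (v l)) ^ 2

@[simp]
theorem eval_sqDist [CommRing K] (u v : σ → K) : eval u (sqDist v) = ∑ l, (u l - v l) ^ 2 := by
  simp [sqDist]

theorem totalDegree_sqDist_le [CommRing K] [Nontrivial K] (v : σ → K) :
    (sqDist v).totalDegree ≤ 2 := by
  refine totalDegree_finsetSum_le fun l _ => (totalDegree_pow _ _).trans ?_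
  have := totalDegree_sub_C_le (X l : MvPolynomial σ K) (v l)
  rw [totalDegree_X] at this
  omega

variable [Field K] [LinearOrder K] [IsStrictOrderedRing K]

theorem eval_sqDist_nonneg (u v : σ → K) : 0 ≤ eval u (sqDist v) := by
  rw [eval_sqDist]
  exact sum_nonneg fun l _ => sq_nonneg _

theorem eval_sqDist_eq_zero_iff {u v : σ → K} : eval u (sqDist v) = 0 ↔ u = v := by
  rw [eval_sqDist, sum_eq_zero_iff_of_nonneg fun l _ => sq_nonneg _]
  simpa [sub_eq_zero] using _root_.funext_iff.symm

end SqDist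

section Atomic

variable {ι κ σ K : Type*} [Fintype ι] [Fintype κ] [Fintype σ]
  [Field K] [LinearOrder K] [IsStrictOrderedRing K]
  {a : ι → K} {b : κ → K} {p : ι → σ → K} {r : κ → σ → K}

theorem mem_range_of_sum_mul_eval_eq (hb : ∀ k, 0 < b k)
    (h : ∀ P : MvPolynomial σ K, P.totalDegree ≤ 2 * Fintype.card ι →
      ∑ i, a i * eval (p i) P = ∑ k, b k * eval (r k) P) (k : κ) :
    r k ∈ Set.range p := by
  set V : MvPolynomial σ K := ∏ i, sqDist (p i)
  have hdeg : V.totalDegree ≤ 2 * Fintype.card ι := by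
    refine (totalDegree_finsetProd _ _).trans ?_
    simpa [mul_comm] using sum_le_sum fun i (_ : i ∈ univ) => totalDegree_sqDist_le (p i)
  have hV : ∀ u, eval u V = ∏ i, eval u (sqDist (p i)) := fun u => map_prod _ _ _
  have hsum : ∑ k, b k * eval (r k) V = 0 := by
    rw [← h V hdeg]
    exact sum_eq_zero fun i _ => by
      rw [hV, prod_eq_zero (mem_univ i) (eval_sqDist_eq_zero_iff.mpr rfl), mul_zero]
  have hnonneg : ∀ k, 0 ≤ b k * eval (r k) V := fun k =>
    mul_nonneg (hb k).le (by rw [hV]; exact prod_nonneg fun i _ => eval_sqDist_nonneg _ _)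
  have hk := (sum_eq_zero_iff_of_nonneg fun k _ => hnonneg k).mp hsum k (mem_univ k)
  rw [mul_eq_zero, or_iff_right (hb k).ne', hV, prod_eq_zero_iff] at hk
  obtain ⟨i, -, hi⟩ := hk
  exact ⟨i, (eval_sqDist_eq_zero_iff.mp hi).symm⟩

theorem exists_totalDegree_le_eval_eq_ite [DecidableEq ι] (hp : Function.Injective p) (i₀ : ι) :
    ∃ L : MvPolynomial σ K, L.totalDegree ≤ 2 * Fintype.card ι ∧
      ∀ i, eval (p i) L = if i = i₀ then 1 else 0 := by
  refine ⟨∏ i ∈ univ.erase i₀, (eval (p i₀) (sqDist (p i)))⁻¹ • sqDist (p i), ?_, fun j => ?_⟩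
  · refine (totalDegree_finsetProd _ _).trans <| (sum_le_sum fun i _ =>
      (totalDegree_smul_le _ _).trans (totalDegree_sqDist_le (p i))).trans ?_
    rw [sum_const, smul_eq_mul, mul_comm]
    exact Nat.mul_le_mul_left 2 (card_le_univ _)
  simp only [map_prod, smul_eval]
  split_ifs with hj
  · subst hj
    refine prod_eq_one fun i hi => inv_mul_cancel₀ ?_
    exact fun h => (ne_of_mem_erase hi) (hp (eval_sqDist_eq_zero_iff.mp h)).symm
  · exact prod_eq_zero (mem_erase.mpr ⟨hj, mem_univ j⟩)
      (by rw [eval_sqDist_eq_zero_iff.mpr rfl, mul_zero])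

theorem eq_sum_filter_of_sum_mul_eval_eq [DecidableEq ι] (hp : Function.Injective p)
    (h : ∀ P : MvPolynomial σ K, P.totalDegree ≤ 2 * Fintype.card ι →
      ∑ i, a i * eval (p i) P = ∑ k, b k * eval (r k) P)
    (τ : κ → ι) (hτ : ∀ k, r k = p (τ k)) (i₀ : ι) :
    a i₀ = ∑ k ∈ univ.filter (τ · = i₀), b k := by
  obtain ⟨L, hdeg, hL⟩ := exists_totalDegree_le_eval_eq_ite hp i₀
  have := h L hdeg
  simp only [hτ, hL, mul_ite, mul_one, mul_zero, sum_ite_eq', mem_univ, if_true] at this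
  rw [this, sum_filter]

theorem exists_equiv_of_sum_mul_eval_eq (hp : Function.Injective p) (hr : Function.Injective r)
    (ha : ∀ i, 0 < a i) (hb : ∀ k, 0 < b k)
    (h : ∀ P : MvPolynomial σ K, P.totalDegree ≤ 2 * Fintype.card ι →
      ∑ i, a i * eval (p i) P = ∑ k, b k * eval (r k) P) :
    ∃ e : ι ≃ κ, ∀ i, a i = b (e i) ∧ p i = r (e i) := by
  classical
  choose τ hτ using mem_range_of_sum_mul_eval_eq hb h
  have hweight := eq_sum_filter_of_sum_mul_eval_eq hp h τ fun k => (hτ k).symm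
  have hinj : Function.Injective τ := fun k k' hkk' => hr (by rw [← hτ k, ← hτ k', hkk'])
  have hsurj : Function.Surjective τ := by
    intro i
    by_contra! hi
    have := hweight i
    rw [filter_false_of_mem fun k _ => hi k, sum_empty] at this
    exact (ha i).ne' this
  set e := Equiv.ofBijective τ ⟨hinj, hsurj⟩
  have hfiber : ∀ i, univ.filter (τ · = i) = {e.symm i} := fun i => by
    ext k
    simp only [mem_filter, mem_univ, true_and, mem_singleton]
    exact ⟨fun hk => hk ▸ (e.symm_apply_apply k).symm, fun hk => hk ▸ e.apply_symm_apply i⟩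
  refine ⟨e.symm, fun i => ⟨?_, ?_⟩⟩
  · rw [hweight i, hfiber i, sum_singleton]
  · rw [← hτ, ← Equiv.ofBijective_apply τ ⟨hinj, hsurj⟩, e.apply_symm_apply]

end Atomic

end MvPolynomial

theorem multinomial_mixture_determined_general
    (m s n q : ℕ)
    (hn : 2 * m ≤ n)
    (a : Fin m → ℝ) (b : Fin s → ℝ)
    (p : Fin m → Fin q → ℝ) (r : Fin s → Fin q → ℝ)
    (hp1 : ∀ i, ∑ j, p i j = 1)
    (hr1 : ∀ i, ∑ j, r i j = 1)
    (hpd : ∀ i i', i ≠ i' →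
      ∃ x ∈ Cnq n q, multinomialMass n (p i) x ≠ multinomialMass n (p i') x)
    (hrd : ∀ j j', j ≠ j' →
      ∃ x ∈ Cnq n q, multinomialMass n (r j) x ≠ multinomialMass n (r j') x)
    (ha : ∀ i, 0 < a i) (hb : ∀ j, 0 < b j)
    (heq : ∀ x ∈ Cnq n q,
      ∑ i, a i * multinomialMass n (p i) x = ∑ j, b j * multinomialMass n (r j) x) :
    ∃ σ : Fin m ≃ Fin s, ∀ i, a i = b (σ i) ∧ p i = r (σ i) := by
  have hmoments : ∀ t : Fin q → ℕ, ∑ j, t j ≤ n →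
      ∑ i, a i * ∏ j, p i j ^ t j = ∑ k, b k * ∏ j, r k j ^ t j :=
    fun t ht => sum_mul_prod_pow_eq_of_mixture_eq hp1 hr1 heq ht
  refine MvPolynomial.exists_equiv_of_sum_mul_eval_eq
    (injective_of_exists_multinomialMass_ne hpd) (injective_of_exists_multinomialMass_ne hrd)
    ha hb fun P hP => MvPolynomial.sum_mul_eval_eq_of_sum_mul_prod_pow_eq hmoments ?_
  rw [Fintype.card_fin] at hP
  exact hP.trans hn

/-- Determinedness of multinomial mixture models: if `n ≥ 2m`, two mixtures of multinomial
distributions `Q_{n,·,q}` (with distinct components and positive weights summing to one,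
with no restriction relating the order `s` of the second mixture to `m`) that are equal as
measures on `C_{n,q}` must coincide up to a permutation. -/
theorem multinomial_mixture_determined
    (m s n q : ℕ) (hm : 0 < m) (hs : 0 < s) (hq : 0 < q) (hn0 : 0 < n)
    (hn : 2 * m ≤ n)
    (a : Fin m → ℝ) (b : Fin s → ℝ)
    (p : Fin m → Fin q → ℝ) (r : Fin s → Fin q → ℝ)
    (hp0 : ∀ i j, 0 ≤ p i j) (hp1 : ∀ i, ∑ j, p i j = 1)
    (hr0 : ∀ i j, 0 ≤ r i j) (hr1 : ∀ i, ∑ j, r i j = 1)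
    (hpd : ∀ i i', i ≠ i' →
      ∃ x ∈ Cnq n q, multinomialMass n (p i) x ≠ multinomialMass n (p i') x)
    (hrd : ∀ j j', j ≠ j' →
      ∃ x ∈ Cnq n q, multinomialMass n (r j) x ≠ multinomialMass n (r j') x)
    (ha : ∀ i, 0 < a i) (hb : ∀ j, 0 < b j)
    (hsa : ∑ i, a i = 1) (hsb : ∑ j, b j = 1)
    (heq : ∀ x ∈ Cnq n q,
      ∑ i, a i * multinomialMass n (p i) x = ∑ j, b j * multinomialMass n (r j) x) :
    ∃ σ : Fin m ≃ Fin s, ∀ i, a i = b (σ i) ∧ p i = r (σ i) :=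
  multinomial_mixture_determined_general m s n q hn a b p r hp1 hr1 hpd hrd ha hb heq
end
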